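/- Let k⁰⁰, k¹¹, k²² > 0 be kernel constants. Then the function ρ ↦ g(ρ) is strictly increasing on (0,∞). -/

import Mathlib

/-- `p(ρ) = (1 + (1 + 3d/ρ²)^{1/2})^{1/2}` with `d = k⁰⁰k²²/(k¹¹)²`. -/
noncomputable def pKer (k00 k11 k22 ρ : ℝ) : ℝ :=
  (1 + (1 + 3 * (k00 * k22 / k11 ^ 2) / ρ ^ 2) ^ ((1 : ℝ) / 2)) ^ ((1 : ℝ) / 2)

/-- `g(ρ) = (16/3)(ρ k⁰⁰ k¹¹)^{1/2}(1/p(ρ) + p(ρ))`. -/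
noncomputable def gKer (k00 k11 k22 ρ : ℝ) : ℝ :=
  (16 / 3) * (ρ * k00 * k11) ^ ((1 : ℝ) / 2) *
    (1 / pKer k00 k11 k22 ρ + pKer k00 k11 k22 ρ)

lemma pKer_pos (k00 k11 k22 ρ : ℝ) (h00 : 0 < k00) (h11 : 0 < k11) (h22 : 0 < k22)
    (hρ : 0 < ρ) : 0 < pKer k00 k11 k22 ρ := by
  unfold pKer
  have h1 : (0:ℝ) < 1 + (1 + 3 * (k00 * k22 / k11 ^ 2) / ρ ^ 2) ^ ((1 : ℝ) / 2) := by
    positivity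
  positivity

lemma gKer_pos (k00 k11 k22 ρ : ℝ) (h00 : 0 < k00) (h11 : 0 < k11) (h22 : 0 < k22)
    (hρ : 0 < ρ) : 0 < gKer k00 k11 k22 ρ := by
  have hp := pKer_pos k00 k11 k22 ρ h00 h11 h22 hρ
  unfold gKer
  have h1 : (0:ℝ) < (ρ * k00 * k11) ^ ((1 : ℝ) / 2) :=
    Real.rpow_pos_of_pos (by positivity) _
  have h2 : (0:ℝ) < 1 / pKer k00 k11 k22 ρ + pKer k00 k11 k22 ρ :=
    add_pos (one_div_pos.mpr hp) hp
  positivity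

lemma gKer_sq (k00 k11 k22 ρ : ℝ) (h00 : 0 < k00) (h11 : 0 < k11) (h22 : 0 < k22)
    (hρ : 0 < ρ) :
    (gKer k00 k11 k22 ρ) ^ 2 =
      (256 / 9) * (k00 * k11) *
        (3 * ρ + Real.sqrt (ρ ^ 2 + 3 * (k00 * k22 / k11 ^ 2))
          + ρ / (1 + (1 + 3 * (k00 * k22 / k11 ^ 2) / ρ ^ 2) ^ ((1 : ℝ) / 2))) := by
  set d := k00 * k22 / k11 ^ 2 with hdd
  have hd : 0 < d := by positivity
  set s := (1 + 3 * d / ρ ^ 2) ^ ((1 : ℝ) / 2) with hs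
  have hs1 : (1:ℝ) ≤ s := Real.one_le_rpow (le_add_of_nonneg_right (by positivity)) (by norm_num)
  have hs0 : (0:ℝ) < s := lt_of_lt_of_le one_pos hs1
  have h1s : (0:ℝ) < 1 + s := by linarith
  set p := pKer k00 k11 k22 ρ with hpdef
  have hp : p = (1 + s) ^ ((1 : ℝ) / 2) := rfl
  have hp0 : (0:ℝ) < p := by rw [hp]; positivity
  have hpsq : p ^ 2 = 1 + s := by
    rw [hp, ← Real.rpow_natCast ((1 + s) ^ ((1:ℝ)/2)) 2,
      ← Real.rpow_mul (by positivity)]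
    norm_num
  have hAsq : ((ρ * k00 * k11) ^ ((1 : ℝ) / 2)) ^ 2 = ρ * k00 * k11 := by
    rw [← Real.rpow_natCast ((ρ * k00 * k11) ^ ((1:ℝ)/2)) 2,
      ← Real.rpow_mul (by positivity)]
    norm_num
  have hρs : ρ * s = Real.sqrt (ρ ^ 2 + 3 * d) := by
    have he : ρ ^ 2 + 3 * d = ρ ^ 2 * (1 + 3 * d / ρ ^ 2) := by
      field_simp
    rw [he, Real.sqrt_mul (sq_nonneg ρ), Real.sqrt_sq hρ.le, hs, Real.sqrt_eq_rpow]
  have hsum : (1 / p + p) ^ 2 = 3 + s + 1 / (1 + s) := by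
    have e1 : (1 / p + p) ^ 2 = 1 / p ^ 2 + 2 + p ^ 2 := by
      field_simp
      ring
    rw [e1, hpsq]
    ring
  have : gKer k00 k11 k22 ρ ^ 2
      = (256 / 9) * ((ρ * k00 * k11) ^ ((1 : ℝ) / 2)) ^ 2 * (1 / p + p) ^ 2 := by
    unfold gKer
    rw [← hpdef]
    ring
  rw [this, hAsq, hsum, ← hρs]
  field_simp

/-- `g` is strictly increasing on `(0,∞)`. -/
theorem stmt5 (k00 k11 k22 : ℝ) (h00 : 0 < k00) (h11 : 0 < k11) (h22 : 0 < k22) :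
    StrictMonoOn (gKer k00 k11 k22) (Set.Ioi (0 : ℝ)) := by
  intro a ha b hb hab
  simp only [Set.mem_Ioi] at ha hb
  have hgb := gKer_pos k00 k11 k22 b h00 h11 h22 hb
  have hsq : (gKer k00 k11 k22 a) ^ 2 < (gKer k00 k11 k22 b) ^ 2 := by
    rw [gKer_sq k00 k11 k22 a h00 h11 h22 ha, gKer_sq k00 k11 k22 b h00 h11 h22 hb]
    set d := k00 * k22 / k11 ^ 2 with hdd
    have hd : 0 < d := by positivity
    have hsle : (1 + 3 * d / b ^ 2) ^ ((1 : ℝ) / 2)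
        ≤ (1 + 3 * d / a ^ 2) ^ ((1 : ℝ) / 2) := by
      apply Real.rpow_le_rpow (by positivity) _ (by norm_num)
      gcongr
    have hsb1 : (1:ℝ) ≤ (1 + 3 * d / b ^ 2) ^ ((1 : ℝ) / 2) :=
      Real.one_le_rpow (le_add_of_nonneg_right (by positivity)) (by norm_num)
    have h1 : Real.sqrt (a ^ 2 + 3 * d) ≤ Real.sqrt (b ^ 2 + 3 * d) := by
      gcongr
    have h2 : a / (1 + (1 + 3 * d / a ^ 2) ^ ((1 : ℝ) / 2))
        ≤ b / (1 + (1 + 3 * d / b ^ 2) ^ ((1 : ℝ) / 2)) := by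
      apply div_le_div₀ hb.le hab.le (by linarith) (by linarith)
    have h3 : 3 * a < 3 * b := by linarith
    have hC : (0:ℝ) < (256 / 9) * (k00 * k11) := by positivity
    apply mul_lt_mul_of_pos_left _ hC
    linarith
  exact lt_of_pow_lt_pow_left₀ 2 hgb.le hsq
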